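/- Let X = (X_1,…,X_m) be a vector of i.i.d. Laplace random variables with scale parameter b = s/ε and let a ∈ ℝ^m with ‖a‖₁ ≤ s. Then for every measurable set R ⊆ ℝ^m, P(X ∈ R) ≤ e^{ε}·P(X ∈ R + a), where R + a = {r + a : r ∈ R}. -/
import Mathlib


open MeasureTheory Finset

/-- The joint distribution of `m` i.i.d. Laplace random variables with scale `b`,
given by its product density with respect to Lebesgue measure. -/
noncomputable def lapVec (m : ℕ) (b : ℝ) : Measure (Fin m → ℝ) :=
  (volume : Measure (Fin m → ℝ)).withDensity
    (fun x => ∏ i, ENNReal.ofReal (Real.exp (-|x i| / b) / (2 * b)))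

lemma lap_density_pointwise (m : ℕ) (b ε : ℝ) (hb : 0 < b) (a x : Fin m → ℝ)
    (ha : ∑ i, |a i| ≤ b * ε) :
    ∏ i, (Real.exp (-|x i| / b) / (2 * b))
      ≤ Real.exp ε * ∏ i, (Real.exp (-|(x + a) i| / b) / (2 * b)) := by
  have h2b : (0:ℝ) < 2 * b := by linarith
  have hprod : ∀ y : Fin m → ℝ,
      ∏ i, (Real.exp (-|y i| / b) / (2 * b))
        = Real.exp (∑ i, (-|y i| / b)) / (2 * b) ^ m := by
    intro y
    rw [Finset.prod_div_distrib, Real.exp_sum, Finset.prod_const, Finset.card_univ,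
      Fintype.card_fin]
  rw [hprod, hprod, ← mul_div_assoc, ← Real.exp_add]
  apply div_le_div_of_nonneg_right _ (by positivity)
  apply Real.exp_le_exp.2
  have key : ∑ i, (-|x i| / b) - ∑ i, (-|(x + a) i| / b) ≤ ε := by
    rw [← Finset.sum_sub_distrib]
    have : ∀ i : Fin m, (-|x i| / b) - (-|(x + a) i| / b) ≤ |a i| / b := by
      intro i
      rw [div_sub_div_same, div_le_div_iff_of_pos_right hb]
      have := abs_sub_abs_le_abs_sub ((x + a) i) (x i)
      simp only [Pi.add_apply] at *
      have h2 : |x i + a i - x i| = |a i| := by ring_nf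
      linarith [this, h2.le, h2.ge]
    calc ∑ i, ((-|x i| / b) - (-|(x + a) i| / b)) ≤ ∑ i, |a i| / b :=
          Finset.sum_le_sum fun i _ => this i
      _ = (∑ i, |a i|) / b := by rw [Finset.sum_div]
      _ ≤ ε := by rw [div_le_iff₀ hb]; linarith [ha]
  linarith

theorem laplace_shift_bound (m : ℕ) (s ε : ℝ) (hs : 0 < s) (hε : 0 < ε)
    (a : Fin m → ℝ) (ha : ∑ i, |a i| ≤ s)
    (R : Set (Fin m → ℝ)) (hR : MeasurableSet R) :
    lapVec m (s / ε) R
      ≤ ENNReal.ofReal (Real.exp ε) * lapVec m (s / ε) ((fun r => r + a) '' R) := by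
  set b := s / ε with hbdef
  have hb : 0 < b := div_pos hs hε
  have hba : ∑ i, |a i| ≤ b * ε := by
    rw [hbdef, div_mul_cancel₀ _ hε.ne']; exact ha
  set f : (Fin m → ℝ) → ENNReal :=
    fun x => ∏ i, ENNReal.ofReal (Real.exp (-|x i| / b) / (2 * b)) with hf
  have hT : MeasurePreserving (fun x : Fin m → ℝ => x + a) volume volume :=
    measurePreserving_add_right volume a
  have hemb : MeasurableEmbedding (fun x : Fin m → ℝ => x + a) :=
    (MeasurableEquiv.addRight a).measurableEmbedding
  have himg : MeasurableSet ((fun r : Fin m → ℝ => r + a) '' R) :=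
    hemb.measurableSet_image.2 hR
  have h1 : lapVec m b R = ∫⁻ x in R, f x ∂volume := withDensity_apply _ hR
  have h2 : lapVec m b ((fun r => r + a) '' R) = ∫⁻ x in R, f (x + a) ∂volume := by
    unfold lapVec
    rw [withDensity_apply _ himg, ← hT.setLIntegral_comp_emb hemb f R]
  rw [h1, h2, ← lintegral_const_mul _ (by fun_prop)]
  apply lintegral_mono
  intro x
  have hnn : ∀ i : Fin m, (0:ℝ) ≤ Real.exp (-|x i| / b) / (2 * b) := by
    intro i; positivity
  have hnn' : ∀ i : Fin m, (0:ℝ) ≤ Real.exp (-|(x + a) i| / b) / (2 * b) := by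
    intro i; positivity
  simp only [hf]
  rw [← ENNReal.ofReal_prod_of_nonneg (fun i _ => hnn i),
    ← ENNReal.ofReal_prod_of_nonneg (fun i _ => hnn' i),
    ← ENNReal.ofReal_mul (Real.exp_nonneg ε)]
  exact ENNReal.ofReal_le_ofReal (lap_density_pointwise m b ε hb a x hba)
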